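/- Let X be a separable Hilbert space with a centered Gaussian measure γ and let U : X → ℝ be convex and continuous. Then e^{-U} belongs to L¹(X, γ). -/

import Mathlib

/-!
A continuous convex function lies above a continuous affine function `x ↦ ⟪z, x⟫ + a`
(Hahn–Banach separation from its closed convex epigraph, then Riesz), so
`e^{-U} ≤ e^{-a} e^{-⟪z, ·⟫}`. The right-hand side is integrable because `⟪z, ·⟫` is a real
Gaussian under `γ`, and Gaussians have exponential moments of every order.
-/

open MeasureTheory ProbabilityTheory Real

lemma ConvexOn.exists_continuousLinearMap_add_le {E : Type*} [AddCommGroup E] [Module ℝ E]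
    [TopologicalSpace E] [IsTopologicalAddGroup E] [ContinuousSMul ℝ E] [LocallyConvexSpace ℝ E]
    {φ : E → ℝ} (hφ : ConvexOn ℝ Set.univ φ) (hφc : LowerSemicontinuous φ) :
    ∃ (l : E →L[ℝ] ℝ) (a : ℝ), ∀ x, l x + a ≤ φ x := by
  obtain ⟨l, a, hle, -⟩ := hφ.exists_affine_le_of_lt (𝕜 := ℝ) (a := φ 0 - 1) (Set.mem_univ 0)
    (by linarith) isClosed_univ (hφc.lowerSemicontinuousOn _)
  exact ⟨l, a, fun y => by simpa using hle ⟨y, Set.mem_univ y⟩⟩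

lemma ConvexOn.exists_inner_add_le {X : Type*} [NormedAddCommGroup X] [InnerProductSpace ℝ X]
    [CompleteSpace X] {U : X → ℝ} (hU : ConvexOn ℝ Set.univ U) (hUc : LowerSemicontinuous U) :
    ∃ (z : X) (a : ℝ), ∀ x, inner ℝ z x + a ≤ U x := by
  obtain ⟨l, a, hle⟩ := hU.exists_continuousLinearMap_add_le hUc
  exact ⟨(InnerProductSpace.toDual ℝ X).symm l, a, fun x => by
    simpa [InnerProductSpace.toDual_symm_apply] using hle x⟩

lemma integrable_exp_mul_of_map_eq_gaussianReal {Ω : Type*} [MeasurableSpace Ω] {μ : Measure Ω}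
    {f : Ω → ℝ} (hf : AEMeasurable f μ) {m : ℝ} {v : NNReal} (hmap : μ.map f = gaussianReal m v)
    (t : ℝ) : Integrable (fun ω => exp (t * f ω)) μ := by
  have h := integrable_exp_mul_gaussianReal (μ := m) (v := v) t
  rw [← hmap] at h
  exact (integrable_map_measure (by fun_prop) hf).mp h

theorem stmt3_general {X : Type*} [NormedAddCommGroup X] [InnerProductSpace ℝ X] [CompleteSpace X]
    [MeasurableSpace X] [BorelSpace X]
    (γ : Measure X) (V : X → NNReal)
    (hgauss : ∀ v : X, γ.map (fun w => (inner ℝ v w : ℝ)) = gaussianReal 0 (V v))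
    (U : X → ℝ) (hU : ConvexOn ℝ Set.univ U) (hUc : Continuous U) :
    Integrable (fun x => Real.exp (-U x)) γ := by
  obtain ⟨z, a, hza⟩ := hU.exists_inner_add_le hUc.lowerSemicontinuous
  have hlin : Integrable (fun x => exp (-1 * inner ℝ z x)) γ :=
    integrable_exp_mul_of_map_eq_gaussianReal (innerSL ℝ z).continuous.aemeasurable (hgauss z) _
  refine (hlin.const_mul (exp (-a))).mono' (by fun_prop) (Filter.Eventually.of_forall fun x => ?_)
  rw [Real.norm_of_nonneg (exp_pos _).le, ← exp_add]
  exact exp_le_exp.mpr (by linarith [hza x])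

/-- If `γ` is a centered Gaussian measure on a separable Hilbert space `X` (each one-dimensional
projection is a centered real Gaussian) and `U : X → ℝ` is convex and continuous, then
`e^{-U} ∈ L¹(X,γ)`. -/
theorem stmt3 {X : Type*} [NormedAddCommGroup X] [InnerProductSpace ℝ X] [CompleteSpace X]
    [MeasurableSpace X] [BorelSpace X] [SecondCountableTopology X]
    (γ : Measure X) [IsProbabilityMeasure γ] (V : X → NNReal)
    (hgauss : ∀ v : X, γ.map (fun w => (inner ℝ v w : ℝ)) = gaussianReal 0 (V v))
    (U : X → ℝ) (hU : ConvexOn ℝ Set.univ U) (hUc : Continuous U) :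
    Integrable (fun x => Real.exp (-U x)) γ :=
  stmt3_general γ V hgauss U hU hUc
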